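/- arXiv:1012.1709 — 3 statements merged into one kernel-verified Lean document; each statement's English description precedes it below -/
import Mathlib

section
/- Let a = a_1 a_2 … be an infinite word over an arbitrary alphabet, let C ≥ 2 be an integer, and let n ≥ 1 be an integer such that p(n, a) ≤ C·n. Then there exist finite words W, U, V (V possibly empty) such that the word W U V U is a prefix of a of length at most (C+1)·n, |U| ≥ n/3, and |W| + |V| ≤ (3C+1)·|U|. -/
/-- `L` is a prefix of the infinite word `w 1 w 2 w 3 ⋯`. -/
def WordPrefix {A : Type*} (L : List A) (w : ℕ → A) : Prop :=
  ∀ i : Fin L.length, L.get i = w (i.1 + 1)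

/-!
Among the `C n + 1` starting positions `0, …, C n`, two positions `i < j` carry the same block
of length `n`, so `w` restricted to `[i + 1, j + n]` has period `d = j - i`. If `3 d ≥ n`, take
`U` of length `min d n` at position `i`, followed after `V` by its copy at position `j`. If
`3 d < n`, the period lets `U` of length `m ≥ n / 3`, a multiple of `d`, repeat immediately
(`V = []`). In both cases `W U V U` ends by position `j + n ≤ (C + 1) n`, and
`|W| + |V| ≤ j ≤ C n ≤ 3 C |U|`.
-/

section

variable {A : Type*}

/-- `w (a + 1) ⋯ w (a + m)`: the block of length `m` after the first `a` letters. -/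
def wordBlock (w : ℕ → A) (a m : ℕ) : List A :=
  (List.range' (a + 1) m).map w

@[simp]
lemma length_wordBlock (w : ℕ → A) (a m : ℕ) : (wordBlock w a m).length = m := by
  simp [wordBlock]

@[simp]
lemma getElem_wordBlock (w : ℕ → A) (a m t : ℕ) (ht : t < (wordBlock w a m).length) :
    (wordBlock w a m)[t] = w (a + 1 + t) := by
  simp [wordBlock]

lemma wordBlock_append_wordBlock (w : ℕ → A) (a m k : ℕ) :
    wordBlock w a m ++ wordBlock w (a + m) k = wordBlock w a (m + k) := by
  rw [wordBlock, wordBlock, wordBlock, ← List.map_append, Nat.add_right_comm,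
    List.range'_append_1]

lemma wordBlock_congr (w : ℕ → A) {a b m : ℕ} (h : ∀ t < m, w (a + 1 + t) = w (b + 1 + t)) :
    wordBlock w a m = wordBlock w b m :=
  List.ext_getElem (by simp) fun t ht _ => by simpa using h t (by simpa using ht)

lemma wordPrefix_iff_eq_wordBlock {L : List A} {w : ℕ → A} :
    WordPrefix L w ↔ L = wordBlock w 0 L.length := by
  refine ⟨fun h => List.ext_getElem (by simp) fun t ht _ => ?_, fun h i => ?_⟩
  · simpa [Nat.add_comm] using h ⟨t, ht⟩
  · rw [List.get_eq_getElem, List.getElem_of_eq h (by simp), getElem_wordBlock, Nat.add_comm]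

lemma wordPrefix_wordBlock_zero (w : ℕ → A) (m : ℕ) : WordPrefix (wordBlock w 0 m) w :=
  wordPrefix_iff_eq_wordBlock.2 (by simp)

lemma WordPrefix.append {L₁ L₂ : List A} {w : ℕ → A} (h₁ : WordPrefix L₁ w)
    (h₂ : L₂ = wordBlock w L₁.length L₂.length) : WordPrefix (L₁ ++ L₂) w := by
  rw [wordPrefix_iff_eq_wordBlock] at h₁ ⊢
  rw [List.length_append, ← wordBlock_append_wordBlock, ← h₁, Nat.zero_add, ← h₂]

lemma exists_lt_blocks_eq_of_encard_le (w : ℕ → A) {n N : ℕ}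
    (h : {bl : Fin n → A | ∃ ℓ : ℕ, ∀ i : Fin n, bl i = w (ℓ + 1 + i.1)}.encard ≤ N) :
    ∃ i j, i < j ∧ j ≤ N ∧ ∀ t < n, w (i + 1 + t) = w (j + 1 + t) := by
  have hcard : (Set.Iic N).encard = N + 1 := by
    rw [← Finset.coe_Iic, Set.encard_coe_eq_coe_finsetCard]
    simp
  obtain ⟨i, hi, j, hj, hne, hij⟩ := Set.exists_ne_map_eq_of_encard_lt_of_maps_to
    (f := fun ℓ (t : Fin n) => w (ℓ + 1 + t.1)) (h.trans_lt (by rw [hcard]; norm_cast; omega))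
    (fun ℓ _ => ⟨ℓ, fun _ => rfl⟩)
  have hblock (t) (ht : t < n) : w (i + 1 + t) = w (j + 1 + t) := congrFun hij ⟨t, ht⟩
  rcases hne.lt_or_gt with hlt | hlt
  · exact ⟨i, j, hlt, hj, hblock⟩
  · exact ⟨j, i, hlt, hi, fun t ht => (hblock t ht).symm⟩

lemma eq_add_mul_of_eq_add {f : ℕ → A} {d n : ℕ} (h : ∀ t < n, f t = f (t + d)) (q : ℕ) :
    ∀ t, t + q * d < n + d → f t = f (t + q * d) := by
  induction q with
  | zero => simp
  | succ q ih =>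
    intro t ht
    rw [Nat.succ_mul] at ht ⊢
    rw [ih t (by omega), ← Nat.add_assoc]
    exact h _ (by omega)

lemma exists_repetition_of_eq_add {f : ℕ → A} {d n : ℕ} (hd : 0 < d)
    (h : ∀ t < n, f t = f (t + d)) :
    ∃ m k, (∀ t < m, f t = f (t + (m + k))) ∧ 2 * m + k ≤ n + d ∧ n ≤ 3 * m ∧ k ≤ d := by
  rcases le_or_gt n (3 * d) with hfar | hnear
  · refine ⟨min d n, d - min d n, fun t ht => ?_, by omega, by omega, by omega⟩
    rw [Nat.add_sub_cancel' (min_le_left d n)]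
    exact h t (by omega)
  · -- `m` is the least multiple of `d` exceeding `n / 3`
    set q := n / (3 * d) + 1
    have hq : 3 * (q * d) = n - n % (3 * d) + 3 * d := by
      rw [Nat.sub_eq_of_eq_add (Nat.div_add_mod n (3 * d)).symm]; ring
    have hmod : n % (3 * d) < 3 * d := Nat.mod_lt _ (by omega)
    refine ⟨q * d, 0, fun t ht => ?_, by omega, by omega, by omega⟩
    exact eq_add_mul_of_eq_add h q t (by omega)

end

theorem repetition_in_low_complexity_word_general {A : Type*} (w : ℕ → A) (C n : ℕ)
    (hcomplexity :
      {bl : Fin n → A | ∃ ℓ : ℕ, ∀ i : Fin n, bl i = w (ℓ + 1 + i.1)}.encard ≤ (C * n : ℕ)) :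
    ∃ W U V : List A,
      WordPrefix (W ++ U ++ V ++ U) w ∧
      (W ++ U ++ V ++ U).length ≤ (C + 1) * n ∧
      n ≤ 3 * U.length ∧
      W.length + V.length ≤ (3 * C + 1) * U.length := by
  obtain ⟨i, j, hij, hjCn, hblock⟩ := exists_lt_blocks_eq_of_encard_le w hcomplexity
  obtain ⟨m, k, hrep, hlen, hnm, hkd⟩ := exists_repetition_of_eq_add (f := fun t => w (i + 1 + t))
    (d := j - i) (by omega) fun t ht => by rw [hblock t ht]; congr 1; omega
  have hCn : C * n ≤ 3 * C * m := by nlinarith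
  refine ⟨wordBlock w 0 i, wordBlock w i m, wordBlock w (i + m) k, ?_, ?_, by simpa, ?_⟩
  · refine (((wordPrefix_wordBlock_zero w i).append ?_).append ?_).append ?_ <;>
      simp only [List.length_append, length_wordBlock]
    refine wordBlock_congr w fun t ht => ?_
    rw [hrep t ht]; congr 1; omega
  · simp only [List.length_append, length_wordBlock, Nat.add_mul, one_mul]; omega
  · simp only [length_wordBlock, Nat.add_mul, one_mul]; omega

theorem repetition_in_low_complexity_word {A : Type*} (w : ℕ → A) (C n : ℕ)
    (hC : 2 ≤ C) (hn : 1 ≤ n)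
    (hcomplexity :
      {bl : Fin n → A | ∃ ℓ : ℕ, ∀ i : Fin n, bl i = w (ℓ + 1 + i.1)}.encard ≤ (C * n : ℕ)) :
    ∃ W U V : List A,
      WordPrefix (W ++ U ++ V ++ U) w ∧
      (W ++ U ++ V ++ U).length ≤ (C + 1) * n ∧
      n ≤ 3 * U.length ∧
      W.length + V.length ≤ (3 * C + 1) * U.length :=
  repetition_in_low_complexity_word_general w C n hcomplexity
end

section
/- Let (a_ℓ)_{ℓ≥1} be a sequence of positive integers with continued fraction value α = [0; a_1, a_2, …] and convergents p_ℓ/q_ℓ. Then for all integers k, m with 1 ≤ k ≤ m, one has |(q_{k−1} q_m − q_k q_{m−1}) α − (q_{k−1} p_m − q_k p_{m−1})| ≤ 2 q_k / q_m. -/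
/-!
Write `L ℓ = q_ℓ α - p_ℓ`; the linear form is `q_{k-1} L m - q_k L (m-1)`. Consecutive convergents
satisfy `(-1)^ℓ (p_{ℓ+1}/q_{ℓ+1} - p_ℓ/q_ℓ) = 1/(q_ℓ q_{ℓ+1})`, an alternating pattern with decreasing
steps, so `α` lies within `1/(q_ℓ q_{ℓ+1})` of `p_ℓ/q_ℓ`, i.e. `|L ℓ| ≤ 1/q_{ℓ+1}`. As `q` is
nondecreasing, both terms are then at most `q_k/q_m`.
-/

open Filter Topology

/-- Denominators of the convergents of the continued fraction `[0; a 1, a 2, ...]`: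
`q_0 = 1`, `q_1 = a_1`, `q_{ℓ+2} = a_{ℓ+2} q_{ℓ+1} + q_ℓ`
(this encodes `q_{-1} = 0, q_0 = 1, q_ℓ = a_ℓ q_{ℓ-1} + q_{ℓ-2}`). -/
def cfQ (a : ℕ → ℕ) : ℕ → ℕ
  | 0 => 1
  | 1 => a 1
  | (n + 2) => a (n + 2) * cfQ a (n + 1) + cfQ a n

/-- Numerators of the convergents: `p_0 = 0`, `p_1 = 1`,
`p_{ℓ+2} = a_{ℓ+2} p_{ℓ+1} + p_ℓ` (encoding `p_{-1} = 1, p_0 = 0`). -/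
def cfP (a : ℕ → ℕ) : ℕ → ℕ
  | 0 => 0
  | 1 => 1
  | (n + 2) => a (n + 2) * cfP a (n + 1) + cfP a n

section Alternating

variable {c e : ℕ → ℝ}

theorem neg_one_pow_mul_sub_mem_Icc_of_alternating (he : Antitone e) (he₀ : ∀ n, 0 ≤ e n)
    (hc : ∀ n, (-1) ^ n * (c (n + 1) - c n) = e n) :
    ∀ d n, (-1) ^ n * (c (n + d) - c n) ∈ Set.Icc 0 (e n)
  | 0, n => by simpa using he₀ n
  | d + 1, n => by
    obtain ⟨h₀, h₁⟩ := neg_one_pow_mul_sub_mem_Icc_of_alternating he he₀ hc d (n + 1)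
    have hsplit : (-1) ^ n * (c (n + (d + 1)) - c n)
        = e n - (-1) ^ (n + 1) * (c (n + 1 + d) - c (n + 1)) := by
      rw [show n + (d + 1) = n + 1 + d by omega, pow_succ]
      linear_combination hc n
    rw [hsplit]
    constructor <;> linarith [he (Nat.le_succ n)]

theorem abs_sub_le_of_tendsto_of_alternating {α : ℝ} (hlim : Tendsto c atTop (𝓝 α))
    (he : Antitone e) (he₀ : ∀ n, 0 ≤ e n) (hc : ∀ n, (-1) ^ n * (c (n + 1) - c n) = e n)
    (n : ℕ) : |α - c n| ≤ e n := by
  refine le_of_tendsto ((hlim.sub_const (c n)).abs) ?_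
  filter_upwards [eventually_ge_atTop n] with m hm
  obtain ⟨d, rfl⟩ := Nat.exists_eq_add_of_le hm
  obtain ⟨h₀, h₁⟩ := neg_one_pow_mul_sub_mem_Icc_of_alternating he he₀ hc d n
  calc |c (n + d) - c n| = |(-1) ^ n * (c (n + d) - c n)| := by simp [abs_mul]
    _ ≤ e n := abs_le.mpr ⟨by linarith, h₁⟩

end Alternating

theorem cfQ_pos {a : ℕ → ℕ} (hpos : ∀ ℓ, 1 ≤ ℓ → 0 < a ℓ) : ∀ n, 0 < cfQ a n
  | 0 => Nat.one_pos
  | 1 => hpos 1 le_rfl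
  | n + 2 => Nat.add_pos_left (Nat.mul_pos (hpos (n + 2) (by omega)) (cfQ_pos hpos (n + 1))) _

theorem monotone_cfQ {a : ℕ → ℕ} (hpos : ∀ ℓ, 1 ≤ ℓ → 0 < a ℓ) : Monotone (cfQ a) := by
  refine monotone_nat_of_le_succ fun n => ?_
  match n with
  | 0 => exact hpos 1 le_rfl
  | n + 1 =>
    show cfQ a (n + 1) ≤ a (n + 2) * cfQ a (n + 1) + cfQ a n
    nlinarith [hpos (n + 2) (by omega)]

theorem cfP_succ_mul_cfQ_sub_cfP_mul_cfQ_succ (a : ℕ → ℕ) :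
    ∀ n, (cfP a (n + 1) : ℤ) * cfQ a n - cfP a n * cfQ a (n + 1) = (-1) ^ n
  | 0 => by simp [cfP, cfQ]
  | n + 1 => by
    have ih := cfP_succ_mul_cfQ_sub_cfP_mul_cfQ_succ a n
    simp only [cfP, cfQ]
    push_cast
    linear_combination (-1 : ℤ) * ih

theorem neg_one_pow_mul_convergent_succ_sub {a : ℕ → ℕ} (hpos : ∀ ℓ, 1 ≤ ℓ → 0 < a ℓ) (n : ℕ) :
    (-1) ^ n * ((cfP a (n + 1) : ℝ) / cfQ a (n + 1) - (cfP a n : ℝ) / cfQ a n)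
      = 1 / ((cfQ a n : ℝ) * cfQ a (n + 1)) := by
  have hq₀ : (cfQ a n : ℝ) ≠ 0 := by exact_mod_cast (cfQ_pos hpos n).ne'
  have hq₁ : (cfQ a (n + 1) : ℝ) ≠ 0 := by exact_mod_cast (cfQ_pos hpos (n + 1)).ne'
  have hdet : (cfP a (n + 1) : ℝ) * cfQ a n - cfP a n * cfQ a (n + 1) = (-1) ^ n := by
    exact_mod_cast cfP_succ_mul_cfQ_sub_cfP_mul_cfQ_succ a n
  have hsq : ((-1 : ℝ) ^ n) ^ 2 = 1 := by rw [← pow_mul, mul_comm, pow_mul, neg_one_sq, one_pow]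
  field_simp
  linear_combination (-1) ^ n * hdet + hsq

section LinearForm

variable {a : ℕ → ℕ} (hpos : ∀ ℓ, 1 ≤ ℓ → 0 < a ℓ) {α : ℝ}
  (hα : Tendsto (fun ℓ => (cfP a ℓ : ℝ) / (cfQ a ℓ : ℝ)) atTop (𝓝 α))
include hpos hα

theorem abs_cfQ_mul_sub_cfP_le (n : ℕ) :
    |(cfQ a n : ℝ) * α - cfP a n| ≤ 1 / (cfQ a (n + 1) : ℝ) := by
  have hq : (0 : ℝ) < cfQ a n := by exact_mod_cast cfQ_pos hpos n
  have hanti : Antitone fun n => 1 / ((cfQ a n : ℝ) * cfQ a (n + 1)) := by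
    intro i j hij
    have := cfQ_pos hpos (i + 1)
    have := cfQ_pos hpos i
    dsimp only
    gcongr <;> exact_mod_cast monotone_cfQ hpos (by omega)
  have hclose := abs_sub_le_of_tendsto_of_alternating hα hanti (fun _ => by positivity)
    (neg_one_pow_mul_convergent_succ_sub hpos) n
  calc |(cfQ a n : ℝ) * α - cfP a n| = |(cfQ a n : ℝ)| * |α - cfP a n / cfQ a n| := by
        rw [← abs_mul, mul_sub, mul_div_cancel₀ _ hq.ne']
    _ = cfQ a n * |α - cfP a n / cfQ a n| := by rw [abs_of_pos hq]
    _ ≤ cfQ a n * (1 / ((cfQ a n : ℝ) * cfQ a (n + 1))) := by gcongr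
    _ = 1 / (cfQ a (n + 1) : ℝ) := by field_simp

theorem abs_cfQ_pred_mul_sub_cfP_pred_le (n : ℕ) :
    |(cfQ a (n - 1) : ℝ) * α - cfP a (n - 1)| ≤ 1 / (cfQ a n : ℝ) := by
  have := cfQ_pos hpos n
  calc |(cfQ a (n - 1) : ℝ) * α - cfP a (n - 1)| ≤ 1 / (cfQ a (n - 1 + 1) : ℝ) :=
        abs_cfQ_mul_sub_cfP_le hpos hα (n - 1)
    _ ≤ 1 / (cfQ a n : ℝ) := by gcongr; exact monotone_cfQ hpos (by omega)

end LinearForm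

theorem linear_form_estimate_one_general (a : ℕ → ℕ) (hpos : ∀ ℓ, 1 ≤ ℓ → 0 < a ℓ)
    (α : ℝ) (hα : Tendsto (fun ℓ => (cfP a ℓ : ℝ) / (cfQ a ℓ : ℝ)) atTop (𝓝 α))
    (k m : ℕ) :
    |((cfQ a (k - 1) : ℝ) * (cfQ a m : ℝ) - (cfQ a k : ℝ) * (cfQ a (m - 1) : ℝ)) * α
        - ((cfQ a (k - 1) : ℝ) * (cfP a m : ℝ) - (cfQ a k : ℝ) * (cfP a (m - 1) : ℝ))|
      ≤ 2 * (cfQ a k : ℝ) / (cfQ a m : ℝ) := by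
  have hqk : (cfQ a (k - 1) : ℝ) ≤ cfQ a k := by exact_mod_cast monotone_cfQ hpos (by omega)
  have hqm : (cfQ a m : ℝ) ≤ cfQ a (m + 1) := by exact_mod_cast monotone_cfQ hpos (by omega)
  have := cfQ_pos hpos m
  have hLm := abs_cfQ_mul_sub_cfP_le hpos hα m
  have hLm' := abs_cfQ_pred_mul_sub_cfP_pred_le hpos hα m
  calc _ = |(cfQ a (k - 1) : ℝ) * ((cfQ a m : ℝ) * α - cfP a m)
          - cfQ a k * ((cfQ a (m - 1) : ℝ) * α - cfP a (m - 1))| := by congr 1; ring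
    _ ≤ cfQ a (k - 1) * (1 / (cfQ a (m + 1) : ℝ)) + cfQ a k * (1 / (cfQ a m : ℝ)) := by
        refine (abs_sub _ _).trans ?_
        rw [abs_mul, abs_mul, Nat.abs_cast, Nat.abs_cast]
        gcongr
    _ ≤ cfQ a k * (1 / (cfQ a m : ℝ)) + cfQ a k * (1 / (cfQ a m : ℝ)) := by gcongr
    _ = 2 * (cfQ a k : ℝ) / (cfQ a m : ℝ) := by ring

theorem linear_form_estimate_one (a : ℕ → ℕ) (hpos : ∀ ℓ, 1 ≤ ℓ → 0 < a ℓ)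
    (α : ℝ) (hα : Tendsto (fun ℓ => (cfP a ℓ : ℝ) / (cfQ a ℓ : ℝ)) atTop (𝓝 α))
    (k m : ℕ) (hk : 1 ≤ k) (hkm : k ≤ m) :
    |((cfQ a (k - 1) : ℝ) * (cfQ a m : ℝ) - (cfQ a k : ℝ) * (cfQ a (m - 1) : ℝ)) * α
        - ((cfQ a (k - 1) : ℝ) * (cfP a m : ℝ) - (cfQ a k : ℝ) * (cfP a (m - 1) : ℝ))|
      ≤ 2 * (cfQ a k : ℝ) / (cfQ a m : ℝ) :=
  linear_form_estimate_one_general a hpos α hα k m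
end

section
/- Let α be a real number, let P, P', Q, Q' be integers with Q ≥ 1 and |P'Q − PQ'| = 1, and let X, Y be real numbers with 1 ≤ X ≤ Y. Assume that |Qα − P| ≤ Q/Y², |Qα − Q'| ≤ Q/X², and Q ≤ 2XY. Then |Q α² − (P + Q') α + P'| ≤ 5/Q. -/
/-! Multiplied by `Q`, the quadratic factors as `(Qα - P)(Qα - Q') + (P'Q - PQ')`: the product
is at most `Q² / (XY)² ≤ 4` and the determinant term has absolute value `1`. -/

theorem abs_mul_le_sq_of_le_div_sq {K : Type*} [Field K] [LinearOrder K] [IsStrictOrderedRing K]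
    {a b q x y c : K} (hq : 0 ≤ q) (ha : |a| ≤ q / y ^ 2) (hb : |b| ≤ q / x ^ 2)
    (hc : q ≤ c * x * y) : |a * b| ≤ c ^ 2 := by
  have hprod : |a * b| ≤ q ^ 2 / (x * y) ^ 2 := by
    calc |a * b| = |a| * |b| := abs_mul a b
      _ ≤ q / y ^ 2 * (q / x ^ 2) := mul_le_mul ha hb (abs_nonneg b) (by positivity)
      _ = q ^ 2 / (x * y) ^ 2 := by rw [div_mul_div_comm]; ring
  have hsq : q ^ 2 ≤ c ^ 2 * (x * y) ^ 2 := by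
    calc q ^ 2 ≤ (c * x * y) ^ 2 := pow_le_pow_left₀ hq hc 2
      _ = c ^ 2 * (x * y) ^ 2 := by ring
  exact hprod.trans (div_le_of_le_mul₀ (by positivity) (by positivity) hsq)

theorem key_quasi_palindromic_estimate_general (α : ℝ) (P P' Q Q' : ℤ)
    (hQ : 1 ≤ Q) (hdet : |P' * Q - P * Q'| = 1)
    (X Y : ℝ)
    (h1 : |(Q : ℝ) * α - (P : ℝ)| ≤ (Q : ℝ) / Y ^ 2)
    (h2 : |(Q : ℝ) * α - (Q' : ℝ)| ≤ (Q : ℝ) / X ^ 2)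
    (h3 : (Q : ℝ) ≤ 2 * X * Y) :
    |(Q : ℝ) * α ^ 2 - ((P : ℝ) + (Q' : ℝ)) * α + (P' : ℝ)| ≤ 5 / (Q : ℝ) := by
  have hQpos : (0 : ℝ) < Q := Int.cast_pos.mpr (by omega)
  have hdetR : |(P' : ℝ) * Q - P * Q'| = 1 := by exact_mod_cast hdet
  have hscaled : |(Q : ℝ) * ((Q : ℝ) * α ^ 2 - ((P : ℝ) + (Q' : ℝ)) * α + (P' : ℝ))| ≤ 5 :=
    calc _ = |((Q : ℝ) * α - P) * ((Q : ℝ) * α - Q') + ((P' : ℝ) * Q - P * Q')| := by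
          congr 1; ring
      _ ≤ |((Q : ℝ) * α - P) * ((Q : ℝ) * α - Q')| + |(P' : ℝ) * Q - P * Q'| := abs_add_le _ _
      _ ≤ 2 ^ 2 + 1 := add_le_add (abs_mul_le_sq_of_le_div_sq hQpos.le h1 h2 h3) hdetR.le
      _ = 5 := by norm_num
  rwa [abs_mul, abs_of_pos hQpos, ← le_div_iff₀' hQpos] at hscaled

theorem key_quasi_palindromic_estimate (α : ℝ) (P P' Q Q' : ℤ)
    (hQ : 1 ≤ Q) (hdet : |P' * Q - P * Q'| = 1)
    (X Y : ℝ) (hX : 1 ≤ X) (hXY : X ≤ Y)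
    (h1 : |(Q : ℝ) * α - (P : ℝ)| ≤ (Q : ℝ) / Y ^ 2)
    (h2 : |(Q : ℝ) * α - (Q' : ℝ)| ≤ (Q : ℝ) / X ^ 2)
    (h3 : (Q : ℝ) ≤ 2 * X * Y) :
    |(Q : ℝ) * α ^ 2 - ((P : ℝ) + (Q' : ℝ)) * α + (P' : ℝ)| ≤ 5 / (Q : ℝ) :=
  key_quasi_palindromic_estimate_general α P P' Q Q' hQ hdet X Y h1 h2 h3
end
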